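/- arXiv:1312.1676 — 4 statements merged into one kernel-verified Lean document; each statement's English description precedes it below -/
import Mathlib

section
/- Over a field F of characteristic 2, for any a_1, b_1, a_2, b_2 ∈ F, the 4-dimensional quadratic forms [a_1,b_1] ⊥ [a_2,b_2] and [a_1+b_2, b_1] ⊥ [a_2+b_1, b_2] are isometric, where [a,b] denotes (u,v) ↦ au² + uv + bv² and ⊥ denotes orthogonal direct sum. -/
/-- The binary quadratic form `[a,b] : (u,v) ↦ a·u² + u·v + b·v²`. -/
def binQF {F : Type*} [Field F] (a b : F) : QuadraticForm F (Fin 2 → F) :=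
  a • QuadraticMap.linMulLin (LinearMap.proj 0) (LinearMap.proj 0) +
    QuadraticMap.linMulLin (LinearMap.proj 0) (LinearMap.proj 1) +
    b • QuadraticMap.linMulLin (LinearMap.proj 1) (LinearMap.proj 1)

lemma binQF_apply {F : Type*} [Field F] (a b : F) (v : Fin 2 → F) :
    binQF a b v = a * (v 0 * v 0) + v 0 * v 1 + b * (v 1 * v 1) := by
  simp [binQF, QuadraticMap.linMulLin_apply]

/-- The involutive linear substitution `((u₁,v₁),(u₂,v₂)) ↦ ((u₁,v₁+u₂),(u₂,v₂+u₁))`. -/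
def binSub (F : Type*) [Field F] [CharP F 2] :
    ((Fin 2 → F) × (Fin 2 → F)) ≃ₗ[F] ((Fin 2 → F) × (Fin 2 → F)) where
  toFun x := (![x.1 0, x.1 1 + x.2 0], ![x.2 0, x.2 1 + x.1 0])
  invFun x := (![x.1 0, x.1 1 + x.2 0], ![x.2 0, x.2 1 + x.1 0])
  map_add' x y := by
    ext i <;> fin_cases i <;> simp <;> ring
  map_smul' c x := by
    ext i <;> fin_cases i <;> simp [mul_add]
  left_inv x := by
    ext i <;> fin_cases i <;> simp [CharTwo.add_self_eq_zero, add_assoc]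
  right_inv x := by
    ext i <;> fin_cases i <;> simp [CharTwo.add_self_eq_zero, add_assoc]

/-- In characteristic 2, `[a₁,b₁] ⊥ [a₂,b₂]` and `[a₁+b₂,b₁] ⊥ [a₂+b₁,b₂]`
are isometric. -/
theorem binQF_prod_equivalent {F : Type*} [Field F] [CharP F 2] (a₁ b₁ a₂ b₂ : F) :
    ((binQF a₁ b₁).prod (binQF a₂ b₂)).Equivalent
      ((binQF (a₁ + b₂) b₁).prod (binQF (a₂ + b₁) b₂)) := by
  refine QuadraticMap.Equivalent.symm ⟨⟨binSub F, fun x => ?_⟩⟩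
  obtain ⟨u, v⟩ := x
  simp only [binSub, LinearEquiv.coe_mk, QuadraticMap.prod_apply, binQF_apply,
    Matrix.cons_val_zero, Matrix.cons_val_one, Matrix.head_cons]
  have h2 : ∀ c : F, c + c = 0 := CharTwo.add_self_eq_zero
  ring_nf
  linear_combination (u 0 * v 1) * h2 b₂ + (u 1 * v 0) * h2 b₁ - (v 1 * v 1) * h2 b₂ + (u 0 * v 0) * h2 1 + (v 1 * v 1) * h2 b₂
end

section
/- Over a field F of characteristic 2, the Arf invariant (discriminant) a_1b_1 + ... + a_nb_n of a standard quadratic form [a_1,b_1] ⊥ ... ⊥ [a_n,b_n] is invariant modulo the Artin–Schreier subgroup ℘(F) = {x² + x : x ∈ F} under each of the following replacements: (A) ([a_k,b_k],[a_{k+1},b_{k+1}]) ↦ ([a_k+b_{k+1},b_k],[a_{k+1}+b_k,b_{k+1}]); (B) [a_k,b_k] ↦ [β²a_k, β⁻²b_k] for β ≠ 0; (C) [a_k,b_k] ↦ [a_k+β²b_k+β, b_k]; (D) [a_k,b_k] ↦ [a_k, b_k+β²a_k+β]. -/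
section
variable {F : Type*} [Field F] [CharP F 2] {n : ℕ}

private lemma sum_diff_one (f g : Fin n → F) (k : Fin n)
    (h : ∀ i, i ≠ k → g i = f i) :
    (∑ i, g i) + (∑ i, f i) = g k + f k := by
  rw [← Finset.sum_add_distrib]
  rw [← Finset.sum_subset (Finset.subset_univ {k})
    (fun i _ hi => by
      rw [h i (by simpa using hi)]; exact CharTwo.add_self_eq_zero _)]
  simp

private lemma sum_diff_two (f g : Fin n → F) (k l : Fin n) (hkl : k ≠ l)
    (h : ∀ i, i ≠ k → i ≠ l → g i = f i) :
    (∑ i, g i) + (∑ i, f i) = (g k + f k) + (g l + f l) := by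
  rw [← Finset.sum_add_distrib]
  rw [← Finset.sum_subset (Finset.subset_univ {k, l})
    (fun i _ hi => by
      simp only [Finset.mem_insert, Finset.mem_singleton, not_or] at hi
      rw [h i hi.1 hi.2]; exact CharTwo.add_self_eq_zero _)]
  rw [Finset.sum_pair hkl]

end


/-- In characteristic 2, the Arf invariant `∑ aᵢbᵢ` of a standard quadratic form
`[a₁,b₁] ⊥ … ⊥ [aₙ,bₙ]` changes by an element of `℘(F) = {x² + x}` under each of the
four basic chain-equivalence steps (A), (B), (C), (D). -/
theorem arf_invariant_steps {F : Type*} [Field F] [CharP F 2] {n : ℕ}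
    (a b : Fin n → F) :
    -- (A): ([a_k,b_k],[a_{k+1},b_{k+1}]) ↦ ([a_k+b_{k+1},b_k],[a_{k+1}+b_k,b_{k+1}])
    (∀ (k : ℕ) (hk : k + 1 < n),
      ∃ x : F,
        (∑ i, (Function.update
            (Function.update a ⟨k, Nat.lt_of_succ_lt hk⟩
              (a ⟨k, Nat.lt_of_succ_lt hk⟩ + b ⟨k + 1, hk⟩))
            ⟨k + 1, hk⟩ (a ⟨k + 1, hk⟩ + b ⟨k, Nat.lt_of_succ_lt hk⟩)) i * b i) +
          (∑ i, a i * b i) = x ^ 2 + x) ∧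
    -- (B): [a_k,b_k] ↦ [β²a_k, β⁻²b_k], β ≠ 0
    (∀ (k : Fin n) (β : F), β ≠ 0 →
      ∃ x : F,
        (∑ i, Function.update a k (β ^ 2 * a k) i *
            Function.update b k (β⁻¹ ^ 2 * b k) i) +
          (∑ i, a i * b i) = x ^ 2 + x) ∧
    -- (C): [a_k,b_k] ↦ [a_k + β²b_k + β, b_k]
    (∀ (k : Fin n) (β : F),
      ∃ x : F,
        (∑ i, Function.update a k (a k + β ^ 2 * b k + β) i * b i) +
          (∑ i, a i * b i) = x ^ 2 + x) ∧
    -- (D): [a_k,b_k] ↦ [a_k, b_k + β²a_k + β]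
    (∀ (k : Fin n) (β : F),
      ∃ x : F,
        (∑ i, a i * Function.update b k (b k + β ^ 2 * a k + β) i) +
          (∑ i, a i * b i) = x ^ 2 + x) := by
  have h2 : (2 : F) = 0 := by exact_mod_cast CharP.cast_eq_zero F 2
  refine ⟨?_, ?_, ?_, ?_⟩
  · intro k hk
    set k1 : Fin n := ⟨k, Nat.lt_of_succ_lt hk⟩
    set k2 : Fin n := ⟨k + 1, hk⟩
    have hne : k1 ≠ k2 := by simp [k1, k2, Fin.ext_iff]
    refine ⟨0, ?_⟩
    rw [sum_diff_two (fun i => a i * b i) _ k1 k2 hne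
      (fun i h1 h3 => by simp [Function.update_of_ne h1, Function.update_of_ne h3])]
    simp only [Function.update_of_ne hne, Function.update_self]
    linear_combination (b k1 * b k2 + a k1 * b k1 + a k2 * b k2) * h2
  · intro k β hβ
    refine ⟨0, ?_⟩
    rw [sum_diff_one (fun i => a i * b i) _ k
      (fun i h1 => by simp [Function.update_of_ne h1])]
    simp only [Function.update_self]
    have : β ^ 2 * a k * (β⁻¹ ^ 2 * b k) = a k * b k := by
      field_simp
    rw [this]
    linear_combination (a k * b k) * h2
  · intro k β
    refine ⟨β * b k, ?_⟩
    rw [sum_diff_one (fun i => a i * b i) _ k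
      (fun i h1 => by simp [Function.update_of_ne h1])]
    simp only [Function.update_self]
    linear_combination (a k * b k) * h2
  · intro k β
    refine ⟨β * a k, ?_⟩
    rw [sum_diff_one (fun i => a i * b i) _ k
      (fun i h1 => by simp [Function.update_of_ne h1])]
    simp only [Function.update_self]
    linear_combination (a k * b k) * h2
end

section
/- Over a field F of characteristic 2, for any c_1, c_2 ∈ F, d_1, d_2 ∈ F× and β ∈ F, the tensor products of quaternion algebras [c_1,d_1) ⊗_F [c_2,d_2) and [c_1 + β²d_1d_2, d_1) ⊗_F [c_2 + β²d_1d_2, d_2) are isomorphic as F-algebras. -/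
/-- The defining relations of the characteristic-2 quaternion algebra `[a,b)`:
`x² + x = a`, `y² = b`, `xy + yx = y` (with `x = ι 0`, `y = ι 1`). -/
inductive QuatCharTwoRel (F : Type*) [Field F] (a b : F) :
    FreeAlgebra F (Fin 2) → FreeAlgebra F (Fin 2) → Prop
  | x_rel : QuatCharTwoRel F a b
      (FreeAlgebra.ι F 0 * FreeAlgebra.ι F 0 + FreeAlgebra.ι F 0)
      (algebraMap F (FreeAlgebra F (Fin 2)) a)
  | y_rel : QuatCharTwoRel F a b
      (FreeAlgebra.ι F 1 * FreeAlgebra.ι F 1)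
      (algebraMap F (FreeAlgebra F (Fin 2)) b)
  | xy_rel : QuatCharTwoRel F a b
      (FreeAlgebra.ι F 0 * FreeAlgebra.ι F 1 + FreeAlgebra.ι F 1 * FreeAlgebra.ι F 0)
      (FreeAlgebra.ι F 1)

/-- The characteristic-2 quaternion algebra `[a,b) = F⟨x,y : x²+x=a, y²=b, xy+yx=y⟩`. -/
abbrev QuatCharTwo (F : Type*) [Field F] (a b : F) : Type _ :=
  RingQuot (QuatCharTwoRel F a b)

namespace QuatAux

variable {F : Type*} [Field F]

noncomputable def gen (a b : F) (i : Fin 2) : QuatCharTwo F a b :=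
  RingQuot.mkAlgHom F (QuatCharTwoRel F a b) (FreeAlgebra.ι F i)

theorem gen_x (a b : F) :
    gen a b 0 * gen a b 0 + gen a b 0 = algebraMap F (QuatCharTwo F a b) a := by
  have := RingQuot.mkAlgHom_rel F (QuatCharTwoRel.x_rel (F := F) (a := a) (b := b))
  simpa [gen] using this

theorem gen_y (a b : F) :
    gen a b 1 * gen a b 1 = algebraMap F (QuatCharTwo F a b) b := by
  have := RingQuot.mkAlgHom_rel F (QuatCharTwoRel.y_rel (F := F) (a := a) (b := b))
  simpa [gen] using this

theorem gen_xy (a b : F) :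
    gen a b 0 * gen a b 1 + gen a b 1 * gen a b 0 = gen a b 1 := by
  have := RingQuot.mkAlgHom_rel F (QuatCharTwoRel.xy_rel (F := F) (a := a) (b := b))
  simpa [gen] using this

noncomputable def lift {A : Type*} [Ring A] [Algebra F A] {a b : F} (x y : A)
    (hx : x * x + x = algebraMap F A a) (hy : y * y = algebraMap F A b)
    (hxy : x * y + y * x = y) : QuatCharTwo F a b →ₐ[F] A :=
  RingQuot.liftAlgHom F ⟨FreeAlgebra.lift F ![x, y], by
    intro u v h
    induction h with
    | x_rel => simpa using hx
    | y_rel => simpa using hy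
    | xy_rel => simpa using hxy⟩

@[simp] theorem lift_gen0 {A : Type*} [Ring A] [Algebra F A] {a b : F} (x y : A)
    (hx : x * x + x = algebraMap F A a) (hy : y * y = algebraMap F A b)
    (hxy : x * y + y * x = y) : lift x y hx hy hxy (gen a b 0) = x := by
  simp [lift, gen]

@[simp] theorem lift_gen1 {A : Type*} [Ring A] [Algebra F A] {a b : F} (x y : A)
    (hx : x * x + x = algebraMap F A a) (hy : y * y = algebraMap F A b)
    (hxy : x * y + y * x = y) : lift x y hx hy hxy (gen a b 1) = y := by
  simp [lift, gen]

theorem hom_ext {A : Type*} [Ring A] [Algebra F A] {a b : F}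
    {f g : QuatCharTwo F a b →ₐ[F] A}
    (h : ∀ i, f (gen a b i) = g (gen a b i)) : f = g := by
  have key : f.comp (RingQuot.mkAlgHom F (QuatCharTwoRel F a b)) =
      g.comp (RingQuot.mkAlgHom F (QuatCharTwoRel F a b)) :=
    FreeAlgebra.hom_ext (funext fun i => h i)
  apply AlgHom.ext
  intro z
  obtain ⟨w, rfl⟩ := RingQuot.mkAlgHom_surjective F _ z
  exact DFunLike.congr_fun key w

theorem commute_map {A : Type*} [Ring A] [Algebra F A] {a b a' b' : F}
    (f : QuatCharTwo F a b →ₐ[F] A) (g : QuatCharTwo F a' b' →ₐ[F] A)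
    (h : ∀ i j, Commute (f (gen a b i)) (g (gen a' b' j))) (p q) :
    Commute (f p) (g q) := by
  have key : ∀ i q, Commute (f (gen a b i)) (g q) := by
    intro i q
    obtain ⟨v, rfl⟩ := RingQuot.mkAlgHom_surjective F _ q
    induction v with
    | grade0 r =>
      rw [AlgHom.commutes, AlgHom.commutes]
      exact (Algebra.commutes r _).symm
    | grade1 j => exact h i j
    | mul u v hu hv => rw [map_mul, map_mul]; exact hu.mul_right hv
    | add u v hu hv => rw [map_add, map_add]; exact hu.add_right hv
  obtain ⟨w, rfl⟩ := RingQuot.mkAlgHom_surjective F _ p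
  induction w with
  | grade0 r =>
    rw [AlgHom.commutes, AlgHom.commutes]
    exact Algebra.commutes r _
  | grade1 i => exact key i q
  | mul u v hu hv => rw [map_mul, map_mul]; exact hu.mul_left hv
  | add u v hu hv => rw [map_add, map_add]; exact hu.add_left hv

set_option maxHeartbeats 1000000
section Key
variable {F : Type*} [Field F] [CharP F 2]

theorem addself {R : Type*} [Ring R] [Algebra F R] (z : R) : z + z = 0 := by
  rw [← two_smul F z]
  have h2 : (2 : F) = 0 := by exact_mod_cast CharP.cast_eq_zero F 2
  rw [h2, zero_smul]

theorem shift {R : Type*} [Ring R] [Algebra F R] {a b c : R} (h : a + b = c) :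
    a = c + b := by
  rw [← h, add_assoc, addself (F := F), add_zero]

theorem key_sq {R : Type*} [Ring R] [Algebra F R] (β c s : F) (X U : R)
    (hX : X * X + X = algebraMap F R c) (hU : U * U = algebraMap F R s)
    (hXU : X * U + U * X = U) :
    (X + β • U) * (X + β • U) + (X + β • U) = algebraMap F R (c + β ^ 2 * s) := by
  have expand : (X + β • U) * (X + β • U) + (X + β • U)
      = ((X * X + X) + (β * β) • (U * U)) + (β • (X * U + U * X) + β • U) := by
    simp only [mul_add, add_mul, smul_mul_assoc, mul_smul_comm, smul_smul, smul_add]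
    abel
  rw [expand, hX, hU, hXU, addself (F := F), add_zero, map_add, pow_two, map_mul,
    ← Algebra.smul_def]

theorem key_xy {R : Type*} [Ring R] [Algebra F R] (β : F) (X U Y : R)
    (hXY : X * Y + Y * X = Y) (hUY : Commute U Y) :
    (X + β • U) * Y + Y * (X + β • U) = Y := by
  have expand : (X + β • U) * Y + Y * (X + β • U)
      = (X * Y + Y * X) + (β • (U * Y) + β • (Y * U)) := by
    simp only [add_mul, mul_add, smul_mul_assoc, mul_smul_comm]
    abel
  rw [expand, hXY, ← hUY.eq, addself (F := F), add_zero]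

theorem key_comm {R : Type*} [Ring R] [Algebra F R] (β : F) (X X' U : R)
    (hc : Commute X X') (h1 : X * U + U * X = U) (h2 : X' * U + U * X' = U) :
    Commute (X + β • U) (X' + β • U) := by
  have hc' : X * X' = X' * X := hc.eq
  have e1 : X * U = U + U * X := shift (F := F) h1
  have e2 : X' * U = U + U * X' := shift (F := F) h2
  show (X + β • U) * (X' + β • U) = (X' + β • U) * (X + β • U)
  have lhs : (X + β • U) * (X' + β • U)
      = X * X' + (β • (X * U) + β • (U * X') + (β * β) • (U * U)) := by
    simp only [mul_add, add_mul, smul_mul_assoc, mul_smul_comm, smul_smul, smul_add]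
    abel
  have rhs : (X' + β • U) * (X + β • U)
      = X' * X + (β • (X' * U) + β • (U * X) + (β * β) • (U * U)) := by
    simp only [mul_add, add_mul, smul_mul_assoc, mul_smul_comm, smul_smul, smul_add]
    abel
  rw [lhs, rhs, hc', e1, e2]
  simp only [smul_add]
  abel

end Key
section Tensor
open TensorProduct

variable {F : Type*} [Field F]
variable (c₁' c₂' d₁ d₂ : F)

theorem tmul_algebraMap {A B : Type*} [Ring A] [Ring B] [Algebra F A] [Algebra F B] (r s : F) :
    (algebraMap F A r) ⊗ₜ[F] (algebraMap F B s) = algebraMap F (A ⊗[F] B) (r * s) :=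
  calc (algebraMap F A r) ⊗ₜ[F] (algebraMap F B s)
      = (algebraMap F A r) ⊗ₜ[F] (s • (1 : B)) := by
        rw [Algebra.algebraMap_eq_smul_one (A := B)]
    _ = s • ((algebraMap F A r) ⊗ₜ[F] (1 : B)) := TensorProduct.tmul_smul s _ _
    _ = s • algebraMap F (A ⊗[F] B) r := by rw [Algebra.TensorProduct.algebraMap_apply]
    _ = algebraMap F (A ⊗[F] B) (r * s) := by rw [Algebra.smul_def, ← map_mul, mul_comm]

theorem tx_sq :
    (gen c₁' d₁ 0 ⊗ₜ[F] (1 : QuatCharTwo F c₂' d₂)) * (gen c₁' d₁ 0 ⊗ₜ[F] 1) +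
      gen c₁' d₁ 0 ⊗ₜ[F] 1
    = algebraMap F (QuatCharTwo F c₁' d₁ ⊗[F] QuatCharTwo F c₂' d₂) c₁' := by
  rw [Algebra.TensorProduct.tmul_mul_tmul, mul_one, ← TensorProduct.add_tmul, gen_x,
    Algebra.TensorProduct.algebraMap_apply]

theorem tx_sq' :
    ((1 : QuatCharTwo F c₁' d₁) ⊗ₜ[F] gen c₂' d₂ 0) * (1 ⊗ₜ[F] gen c₂' d₂ 0) +
      1 ⊗ₜ[F] gen c₂' d₂ 0
    = algebraMap F (QuatCharTwo F c₁' d₁ ⊗[F] QuatCharTwo F c₂' d₂) c₂' := by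
  rw [Algebra.TensorProduct.tmul_mul_tmul, mul_one, ← TensorProduct.tmul_add, gen_x,
    Algebra.TensorProduct.algebraMap_apply']

theorem ty_sq :
    (gen c₁' d₁ 1 ⊗ₜ[F] (1 : QuatCharTwo F c₂' d₂)) * (gen c₁' d₁ 1 ⊗ₜ[F] 1)
    = algebraMap F (QuatCharTwo F c₁' d₁ ⊗[F] QuatCharTwo F c₂' d₂) d₁ := by
  rw [Algebra.TensorProduct.tmul_mul_tmul, mul_one, gen_y,
    Algebra.TensorProduct.algebraMap_apply]

theorem ty_sq' :
    ((1 : QuatCharTwo F c₁' d₁) ⊗ₜ[F] gen c₂' d₂ 1) * (1 ⊗ₜ[F] gen c₂' d₂ 1)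
    = algebraMap F (QuatCharTwo F c₁' d₁ ⊗[F] QuatCharTwo F c₂' d₂) d₂ := by
  rw [Algebra.TensorProduct.tmul_mul_tmul, mul_one, gen_y,
    Algebra.TensorProduct.algebraMap_apply']

theorem tU_sq :
    (gen c₁' d₁ 1 ⊗ₜ[F] gen c₂' d₂ 1) * (gen c₁' d₁ 1 ⊗ₜ[F] gen c₂' d₂ 1)
    = algebraMap F (QuatCharTwo F c₁' d₁ ⊗[F] QuatCharTwo F c₂' d₂) (d₁ * d₂) := by
  rw [Algebra.TensorProduct.tmul_mul_tmul, gen_y, gen_y, tmul_algebraMap]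

theorem tXU :
    (gen c₁' d₁ 0 ⊗ₜ[F] (1 : QuatCharTwo F c₂' d₂)) * (gen c₁' d₁ 1 ⊗ₜ[F] gen c₂' d₂ 1) +
      (gen c₁' d₁ 1 ⊗ₜ[F] gen c₂' d₂ 1) * (gen c₁' d₁ 0 ⊗ₜ[F] 1)
    = gen c₁' d₁ 1 ⊗ₜ[F] gen c₂' d₂ 1 := by
  rw [Algebra.TensorProduct.tmul_mul_tmul, Algebra.TensorProduct.tmul_mul_tmul, one_mul, mul_one,
    ← TensorProduct.add_tmul, gen_xy]

theorem tXU' :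
    ((1 : QuatCharTwo F c₁' d₁) ⊗ₜ[F] gen c₂' d₂ 0) * (gen c₁' d₁ 1 ⊗ₜ[F] gen c₂' d₂ 1) +
      (gen c₁' d₁ 1 ⊗ₜ[F] gen c₂' d₂ 1) * (1 ⊗ₜ[F] gen c₂' d₂ 0)
    = gen c₁' d₁ 1 ⊗ₜ[F] gen c₂' d₂ 1 := by
  rw [Algebra.TensorProduct.tmul_mul_tmul, Algebra.TensorProduct.tmul_mul_tmul, one_mul, mul_one,
    ← TensorProduct.tmul_add, gen_xy]

theorem txy :
    (gen c₁' d₁ 0 ⊗ₜ[F] (1 : QuatCharTwo F c₂' d₂)) * (gen c₁' d₁ 1 ⊗ₜ[F] 1) +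
      (gen c₁' d₁ 1 ⊗ₜ[F] 1) * (gen c₁' d₁ 0 ⊗ₜ[F] 1)
    = gen c₁' d₁ 1 ⊗ₜ[F] (1 : QuatCharTwo F c₂' d₂) := by
  rw [Algebra.TensorProduct.tmul_mul_tmul, Algebra.TensorProduct.tmul_mul_tmul, one_mul,
    ← TensorProduct.add_tmul, gen_xy]

theorem txy' :
    ((1 : QuatCharTwo F c₁' d₁) ⊗ₜ[F] gen c₂' d₂ 0) * (1 ⊗ₜ[F] gen c₂' d₂ 1) +
      (1 ⊗ₜ[F] gen c₂' d₂ 1) * (1 ⊗ₜ[F] gen c₂' d₂ 0)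
    = (1 : QuatCharTwo F c₁' d₁) ⊗ₜ[F] gen c₂' d₂ 1 := by
  rw [Algebra.TensorProduct.tmul_mul_tmul, Algebra.TensorProduct.tmul_mul_tmul, one_mul,
    ← TensorProduct.tmul_add, gen_xy]

theorem tUy₁ :
    Commute (gen c₁' d₁ 1 ⊗ₜ[F] gen c₂' d₂ 1) (gen c₁' d₁ 1 ⊗ₜ[F] (1 : QuatCharTwo F c₂' d₂)) := by
  show _ = _
  rw [Algebra.TensorProduct.tmul_mul_tmul, Algebra.TensorProduct.tmul_mul_tmul, one_mul, mul_one]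

theorem tUy₂ :
    Commute (gen c₁' d₁ 1 ⊗ₜ[F] gen c₂' d₂ 1) ((1 : QuatCharTwo F c₁' d₁) ⊗ₜ[F] gen c₂' d₂ 1) := by
  show _ = _
  rw [Algebra.TensorProduct.tmul_mul_tmul, Algebra.TensorProduct.tmul_mul_tmul, one_mul, mul_one]

theorem tcomm (i j : Fin 2) :
    Commute (gen c₁' d₁ i ⊗ₜ[F] (1 : QuatCharTwo F c₂' d₂))
      ((1 : QuatCharTwo F c₁' d₁) ⊗ₜ[F] gen c₂' d₂ j) := by
  show _ = _
  rw [Algebra.TensorProduct.tmul_mul_tmul, Algebra.TensorProduct.tmul_mul_tmul, one_mul, mul_one,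
    one_mul, mul_one]

end Tensor
section Phi
open TensorProduct

variable {F : Type*} [Field F] [CharP F 2]
variable (β c₁ c₂ c₁' c₂' d₁ d₂ : F)

noncomputable def f₁ (h₁ : c₁ = c₁' + β ^ 2 * (d₁ * d₂)) :
    QuatCharTwo F c₁ d₁ →ₐ[F] (QuatCharTwo F c₁' d₁ ⊗[F] QuatCharTwo F c₂' d₂) :=
  lift (gen c₁' d₁ 0 ⊗ₜ[F] 1 + β • (gen c₁' d₁ 1 ⊗ₜ[F] gen c₂' d₂ 1)) (gen c₁' d₁ 1 ⊗ₜ[F] 1)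
    (by rw [h₁]
        exact key_sq β c₁' (d₁ * d₂) (gen c₁' d₁ 0 ⊗ₜ[F] 1) (gen c₁' d₁ 1 ⊗ₜ[F] gen c₂' d₂ 1)
          (tx_sq c₁' c₂' d₁ d₂) (tU_sq c₁' c₂' d₁ d₂) (tXU c₁' c₂' d₁ d₂))
    (ty_sq c₁' c₂' d₁ d₂)
    (key_xy β (gen c₁' d₁ 0 ⊗ₜ[F] 1) (gen c₁' d₁ 1 ⊗ₜ[F] gen c₂' d₂ 1) (gen c₁' d₁ 1 ⊗ₜ[F] 1)
      (txy c₁' c₂' d₁ d₂) (tUy₁ c₁' c₂' d₁ d₂))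

noncomputable def f₂ (h₂ : c₂ = c₂' + β ^ 2 * (d₁ * d₂)) :
    QuatCharTwo F c₂ d₂ →ₐ[F] (QuatCharTwo F c₁' d₁ ⊗[F] QuatCharTwo F c₂' d₂) :=
  lift ((1 : QuatCharTwo F c₁' d₁) ⊗ₜ[F] gen c₂' d₂ 0
      + β • (gen c₁' d₁ 1 ⊗ₜ[F] gen c₂' d₂ 1)) ((1 : QuatCharTwo F c₁' d₁) ⊗ₜ[F] gen c₂' d₂ 1)
    (by rw [h₂]
        exact key_sq β c₂' (d₁ * d₂) ((1 : QuatCharTwo F c₁' d₁) ⊗ₜ[F] gen c₂' d₂ 0)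
          (gen c₁' d₁ 1 ⊗ₜ[F] gen c₂' d₂ 1)
          (tx_sq' c₁' c₂' d₁ d₂) (tU_sq c₁' c₂' d₁ d₂) (tXU' c₁' c₂' d₁ d₂))
    (ty_sq' c₁' c₂' d₁ d₂)
    (key_xy β ((1 : QuatCharTwo F c₁' d₁) ⊗ₜ[F] gen c₂' d₂ 0)
      (gen c₁' d₁ 1 ⊗ₜ[F] gen c₂' d₂ 1) ((1 : QuatCharTwo F c₁' d₁) ⊗ₜ[F] gen c₂' d₂ 1)
      (txy' c₁' c₂' d₁ d₂) (tUy₂ c₁' c₂' d₁ d₂))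

theorem gen_commute (h₁ : c₁ = c₁' + β ^ 2 * (d₁ * d₂)) (h₂ : c₂ = c₂' + β ^ 2 * (d₁ * d₂))
    (i j : Fin 2) :
    Commute ((f₁ β c₁ c₁' c₂' d₁ d₂ h₁) (gen c₁ d₁ i)) ((f₂ β c₂ c₁' c₂' d₁ d₂ h₂) (gen c₂ d₂ j)) := by
  fin_cases i <;> fin_cases j <;>
    simp only [f₁, f₂, Fin.isValue, Fin.mk_zero, Fin.mk_one, lift_gen0, lift_gen1]
  · exact key_comm β (gen c₁' d₁ 0 ⊗ₜ[F] 1) ((1 : QuatCharTwo F c₁' d₁) ⊗ₜ[F] gen c₂' d₂ 0)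
      (gen c₁' d₁ 1 ⊗ₜ[F] gen c₂' d₂ 1)
      (tcomm c₁' c₂' d₁ d₂ 0 0) (tXU c₁' c₂' d₁ d₂) (tXU' c₁' c₂' d₁ d₂)
  · exact (tcomm c₁' c₂' d₁ d₂ 0 1).add_left
      ((tUy₂ c₁' c₂' d₁ d₂).smul_left β)
  · exact (tcomm c₁' c₂' d₁ d₂ 1 0).add_right
      (((tUy₁ c₁' c₂' d₁ d₂).symm).smul_right β)
  · exact tcomm c₁' c₂' d₁ d₂ 1 1

theorem map_commute (h₁ : c₁ = c₁' + β ^ 2 * (d₁ * d₂)) (h₂ : c₂ = c₂' + β ^ 2 * (d₁ * d₂)) :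
    ∀ p q, Commute ((f₁ β c₁ c₁' c₂' d₁ d₂ h₁) p) ((f₂ β c₂ c₁' c₂' d₁ d₂ h₂) q) := by
  intro p q
  exact commute_map (A := QuatCharTwo F c₁' d₁ ⊗[F] QuatCharTwo F c₂' d₂) (f₁ β c₁ c₁' c₂' d₁ d₂ h₁) (f₂ β c₂ c₁' c₂' d₁ d₂ h₂)
    (gen_commute β c₁ c₂ c₁' c₂' d₁ d₂ h₁ h₂) p q

noncomputable def phi (h₁ : c₁ = c₁' + β ^ 2 * (d₁ * d₂)) (h₂ : c₂ = c₂' + β ^ 2 * (d₁ * d₂)) :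
    (QuatCharTwo F c₁ d₁ ⊗[F] QuatCharTwo F c₂ d₂) →ₐ[F]
      (QuatCharTwo F c₁' d₁ ⊗[F] QuatCharTwo F c₂' d₂) :=
  Algebra.TensorProduct.lift (f₁ β c₁ c₁' c₂' d₁ d₂ h₁) (f₂ β c₂ c₁' c₂' d₁ d₂ h₂)
    (map_commute β c₁ c₂ c₁' c₂' d₁ d₂ h₁ h₂)

variable (h₁ : c₁ = c₁' + β ^ 2 * (d₁ * d₂)) (h₂ : c₂ = c₂' + β ^ 2 * (d₁ * d₂))

theorem phi_x1 : phi β c₁ c₂ c₁' c₂' d₁ d₂ h₁ h₂ (gen c₁ d₁ 0 ⊗ₜ[F] 1)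
    = gen c₁' d₁ 0 ⊗ₜ[F] 1 + β • (gen c₁' d₁ 1 ⊗ₜ[F] gen c₂' d₂ 1) := by
  rw [phi, Algebra.TensorProduct.lift_tmul, map_one, mul_one, f₁, lift_gen0]

theorem phi_y1 : phi β c₁ c₂ c₁' c₂' d₁ d₂ h₁ h₂ (gen c₁ d₁ 1 ⊗ₜ[F] 1)
    = gen c₁' d₁ 1 ⊗ₜ[F] 1 := by
  rw [phi, Algebra.TensorProduct.lift_tmul, map_one, mul_one, f₁, lift_gen1]

theorem phi_x2 : phi β c₁ c₂ c₁' c₂' d₁ d₂ h₁ h₂ ((1 : QuatCharTwo F c₁ d₁) ⊗ₜ[F] gen c₂ d₂ 0)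
    = (1 : QuatCharTwo F c₁' d₁) ⊗ₜ[F] gen c₂' d₂ 0
      + β • (gen c₁' d₁ 1 ⊗ₜ[F] gen c₂' d₂ 1) := by
  rw [phi, Algebra.TensorProduct.lift_tmul, map_one, one_mul, f₂, lift_gen0]

theorem phi_y2 : phi β c₁ c₂ c₁' c₂' d₁ d₂ h₁ h₂ ((1 : QuatCharTwo F c₁ d₁) ⊗ₜ[F] gen c₂ d₂ 1)
    = (1 : QuatCharTwo F c₁' d₁) ⊗ₜ[F] gen c₂' d₂ 1 := by
  rw [phi, Algebra.TensorProduct.lift_tmul, map_one, one_mul, f₂, lift_gen1]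

theorem phi_U : phi β c₁ c₂ c₁' c₂' d₁ d₂ h₁ h₂ (gen c₁ d₁ 1 ⊗ₜ[F] gen c₂ d₂ 1)
    = gen c₁' d₁ 1 ⊗ₜ[F] gen c₂' d₂ 1 := by
  rw [phi, Algebra.TensorProduct.lift_tmul, f₁, f₂, lift_gen1, lift_gen1,
    Algebra.TensorProduct.tmul_mul_tmul, one_mul, mul_one]

theorem phi_comp (h₁' : c₁' = c₁ + β ^ 2 * (d₁ * d₂)) (h₂' : c₂' = c₂ + β ^ 2 * (d₁ * d₂)) :
    (phi β c₁' c₂' c₁ c₂ d₁ d₂ h₁' h₂').comp (phi β c₁ c₂ c₁' c₂' d₁ d₂ h₁ h₂)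
      = AlgHom.id F _ := by
  apply Algebra.TensorProduct.ext
  · refine hom_ext (A := QuatCharTwo F c₁ d₁ ⊗[F] QuatCharTwo F c₂ d₂) fun i => ?_
    fin_cases i <;>
      simp only [AlgHom.coe_comp, Function.comp_apply, Algebra.TensorProduct.includeLeft_apply,
        AlgHom.coe_id, id_eq, Fin.isValue, Fin.mk_zero, Fin.mk_one]
    · rw [phi_x1, map_add, map_smul, phi_x1, phi_U, add_assoc, ← smul_add,
        addself (F := F) (gen c₁ d₁ 1 ⊗ₜ[F] gen c₂ d₂ 1), smul_zero, add_zero]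
    · rw [phi_y1, phi_y1]
  · refine hom_ext (A := QuatCharTwo F c₁ d₁ ⊗[F] QuatCharTwo F c₂ d₂) fun i => ?_
    fin_cases i <;>
      simp only [AlgHom.coe_comp, AlgHom.coe_restrictScalars', Function.comp_apply,
        Algebra.TensorProduct.includeRight_apply, AlgHom.coe_id, id_eq, Fin.isValue, Fin.mk_zero, Fin.mk_one]
    · rw [phi_x2, map_add, map_smul, phi_x2, phi_U, add_assoc, ← smul_add,
        addself (F := F) (gen c₁ d₁ 1 ⊗ₜ[F] gen c₂ d₂ 1), smul_zero, add_zero]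
    · rw [phi_y2, phi_y2]

end Phi
end QuatAux

open TensorProduct in
/-- In characteristic 2, `[c₁,d₁) ⊗ [c₂,d₂) ≅ [c₁+β²d₁d₂, d₁) ⊗ [c₂+β²d₁d₂, d₂)`. -/
theorem quatCharTwo_tensor_iso {F : Type*} [Field F] [CharP F 2]
    (c₁ c₂ d₁ d₂ β : F) (hd₁ : d₁ ≠ 0) (hd₂ : d₂ ≠ 0) :
    Nonempty ((QuatCharTwo F c₁ d₁ ⊗[F] QuatCharTwo F c₂ d₂) ≃ₐ[F]
      (QuatCharTwo F (c₁ + β ^ 2 * d₁ * d₂) d₁ ⊗[F]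
        QuatCharTwo F (c₂ + β ^ 2 * d₁ * d₂) d₂)) := by
  have hz : β ^ 2 * (d₁ * d₂) + β ^ 2 * (d₁ * d₂) = (0 : F) := QuatAux.addself (F := F) _
  have hA : c₁ = (c₁ + β ^ 2 * d₁ * d₂) + β ^ 2 * (d₁ * d₂) := by
    rw [mul_assoc, add_assoc, hz, add_zero]
  have hB : c₂ = (c₂ + β ^ 2 * d₁ * d₂) + β ^ 2 * (d₁ * d₂) := by
    rw [mul_assoc, add_assoc, hz, add_zero]
  have hA' : c₁ + β ^ 2 * d₁ * d₂ = c₁ + β ^ 2 * (d₁ * d₂) := by rw [mul_assoc]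
  have hB' : c₂ + β ^ 2 * d₁ * d₂ = c₂ + β ^ 2 * (d₁ * d₂) := by rw [mul_assoc]
  exact ⟨AlgEquiv.ofAlgHom
    (QuatAux.phi β c₁ c₂ (c₁ + β ^ 2 * d₁ * d₂) (c₂ + β ^ 2 * d₁ * d₂) d₁ d₂ hA hB)
    (QuatAux.phi β (c₁ + β ^ 2 * d₁ * d₂) (c₂ + β ^ 2 * d₁ * d₂) c₁ c₂ d₁ d₂ hA' hB')
    (QuatAux.phi_comp β _ _ _ _ d₁ d₂ hA' hB' hA hB)
    (QuatAux.phi_comp β _ _ _ _ d₁ d₂ hA hB hA' hB')⟩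
end

section
/- Over a field F of characteristic not 2, for any c_1, c_2, d_1, d_2 ∈ F× and β ∈ F with β² − c_1c_2 ≠ 0, the tensor products (c_1, d_1) ⊗_F (c_2, d_2) and (c_1, (β² − c_1c_2)d_1) ⊗_F (c_2, (β² − c_1c_2)d_2) are isomorphic as F-algebras. -/
open scoped Quaternion TensorProduct

/-!
In `A = (c₁, d₁) ⊗ (c₂, d₂)` with standard generators `i₁, j₁, i₂, j₂`, the element `t = i₁ i₂`
commutes with `i₁, i₂`, anticommutes with `j₁, j₂`, and `t² = c₁ c₂`. Hence for `u = x + y t` and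
`ū = x - y t` we have `j₁ u = ū j₁`, `ū u = x² - c₁ c₂ y²`, so `i₁, j₁ u` and `i₂, j₂ u` are again
commuting quaternion bases, now with `j`-squares multiplied by `x² - c₁ c₂ y²`. Twisting by
`β + t` and by `(β - t) / (β² - c₁ c₂)` gives mutually inverse homomorphisms, since the product of
these two elements is `1`.
-/

namespace QuaternionAlgebra

open Algebra.TensorProduct

namespace Basis

variable {R A : Type*} [CommRing R] [Ring A] [Algebra R A]

theorem commute_liftHom {c₁ c₂ c₃ : R} (q : Basis A c₁ c₂ c₃) {a : A} (hi : Commute a q.i)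
    (hj : Commute a q.j) (x : ℍ[R,c₁,c₂,c₃]) : Commute a (q.liftHom x) := by
  refine Algebra.commute_of_mem_adjoin_of_forall_mem_commute
    (q.range_liftHom ▸ AlgHom.mem_range_self _ x) ?_
  rintro _ (rfl | rfl | rfl)
  · exact hi
  · exact hj
  · exact q.i_mul_j ▸ hi.mul_right hj

theorem commute_liftHom_liftHom {c₁ c₂ c₃ d₁ d₂ d₃ : R} (q : Basis A c₁ c₂ c₃)
    (q' : Basis A d₁ d₂ d₃) (hii : Commute q.i q'.i) (hij : Commute q.i q'.j)
    (hji : Commute q.j q'.i) (hjj : Commute q.j q'.j) (x : ℍ[R,c₁,c₂,c₃]) (y : ℍ[R,d₁,d₂,d₃]) :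
    Commute (q.liftHom x) (q'.liftHom y) :=
  q'.commute_liftHom (q.commute_liftHom hii.symm hji.symm x).symm
    (q.commute_liftHom hij.symm hjj.symm x).symm y

theorem j_mul_i_eq_neg {a b : R} (q : Basis A a 0 b) : q.j * q.i = -(q.i * q.j) := by
  rw [q.j_mul_i, q.i_mul_j, zero_smul, zero_sub]

@[simp]
theorem liftHom_self_i {c₁ c₂ c₃ : R} (q : Basis A c₁ c₂ c₃) :
    q.liftHom (Basis.self R).i = q.i :=
  congrArg Basis.i (QuaternionAlgebra.lift.symm_apply_apply q)

@[simp]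
theorem liftHom_self_j {c₁ c₂ c₃ : R} (q : Basis A c₁ c₂ c₃) :
    q.liftHom (Basis.self R).j = q.j :=
  congrArg Basis.j (QuaternionAlgebra.lift.symm_apply_apply q)

@[simps i j]
def twist {a b b' c : R} (q : Basis A a 0 b) {u ū : A} (hi : Commute q.i u)
    (hj : q.j * u = ū * q.j) (hu : ū * u = c • 1) (hb : b' = c * b) : Basis A a 0 b' where
  i := q.i
  j := q.j * u
  k := q.k * u
  i_mul_i := q.i_mul_i
  j_mul_j := by
    rw [hb, ← mul_assoc, hj, mul_assoc ū, q.j_mul_j, mul_smul_comm, mul_one, smul_mul_assoc, hu,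
      smul_smul, mul_comm]
  i_mul_j := by rw [← mul_assoc, q.i_mul_j]
  j_mul_i := by rw [mul_assoc, ← hi.eq, ← mul_assoc, q.j_mul_i]; simp

end Basis

variable {R A : Type*} [CommRing R] [Ring A] [Algebra R A]

variable (A) in
structure CommutingBases (a₁ b₁ a₂ b₂ : R) where
  fst : Basis A a₁ 0 b₁
  snd : Basis A a₂ 0 b₂
  commute_i_i : Commute fst.i snd.i
  commute_i_j : Commute fst.i snd.j
  commute_j_i : Commute fst.j snd.i
  commute_j_j : Commute fst.j snd.j

namespace CommutingBases

variable {a₁ b₁ a₂ b₂ : R} (P : CommutingBases A a₁ b₁ a₂ b₂)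

def tensorLift : ℍ[R,a₁,b₁] ⊗[R] ℍ[R,a₂,b₂] →ₐ[R] A :=
  Algebra.TensorProduct.lift P.fst.liftHom P.snd.liftHom <|
    P.fst.commute_liftHom_liftHom P.snd P.commute_i_i P.commute_i_j P.commute_j_i P.commute_j_j

@[simp]
theorem tensorLift_tmul_one (x : ℍ[R,a₁,b₁]) : P.tensorLift (x ⊗ₜ 1) = P.fst.liftHom x := by
  rw [tensorLift, Algebra.TensorProduct.lift_tmul, map_one, mul_one]

@[simp]
theorem tensorLift_one_tmul (y : ℍ[R,a₂,b₂]) : P.tensorLift (1 ⊗ₜ y) = P.snd.liftHom y := by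
  rw [tensorLift, Algebra.TensorProduct.lift_tmul, map_one, one_mul]

def iMulI : A := P.fst.i * P.snd.i

theorem commute_fst_i_iMulI : Commute P.fst.i P.iMulI :=
  (Commute.refl _).mul_right P.commute_i_i

theorem commute_snd_i_iMulI : Commute P.snd.i P.iMulI :=
  P.commute_i_i.symm.mul_right (Commute.refl _)

theorem fst_j_mul_iMulI : P.fst.j * P.iMulI = -(P.iMulI * P.fst.j) := by
  rw [iMulI, ← mul_assoc, P.fst.j_mul_i_eq_neg, neg_mul, mul_assoc, P.commute_j_i.eq, mul_assoc]

theorem snd_j_mul_iMulI : P.snd.j * P.iMulI = -(P.iMulI * P.snd.j) := by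
  rw [iMulI, ← mul_assoc, ← P.commute_i_j.eq, mul_assoc, P.snd.j_mul_i_eq_neg, mul_neg,
    mul_assoc]

theorem iMulI_mul_iMulI : P.iMulI * P.iMulI = (a₁ * a₂) • 1 := by
  rw [iMulI, mul_assoc, ← mul_assoc P.snd.i, ← P.commute_i_i.eq, mul_assoc, P.snd.i_mul_i,
    ← mul_assoc, P.fst.i_mul_i]
  simp [smul_smul, mul_comm]

def twistElem (x y : R) : A := x • 1 + y • P.iMulI

theorem commute_fst_i_twistElem (x y : R) : Commute P.fst.i (P.twistElem x y) :=
  ((Commute.one_right _).smul_right x).add_right (P.commute_fst_i_iMulI.smul_right y)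

theorem commute_snd_i_twistElem (x y : R) : Commute P.snd.i (P.twistElem x y) :=
  ((Commute.one_right _).smul_right x).add_right (P.commute_snd_i_iMulI.smul_right y)

theorem fst_j_mul_twistElem (x y : R) :
    P.fst.j * P.twistElem x y = P.twistElem x (-y) * P.fst.j := by
  simp only [twistElem, mul_add, add_mul, mul_smul_comm, smul_mul_assoc, fst_j_mul_iMulI,
    mul_one, one_mul, neg_smul, smul_neg, neg_mul]

theorem snd_j_mul_twistElem (x y : R) :
    P.snd.j * P.twistElem x y = P.twistElem x (-y) * P.snd.j := by
  simp only [twistElem, mul_add, add_mul, mul_smul_comm, smul_mul_assoc, snd_j_mul_iMulI,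
    mul_one, one_mul, neg_smul, smul_neg, neg_mul]

theorem twistElem_mul_twistElem (x y x' y' : R) :
    P.twistElem x y * P.twistElem x' y' =
      P.twistElem (x * x' + a₁ * a₂ * (y * y')) (x * y' + y * x') := by
  simp only [twistElem, mul_add, add_mul, mul_smul_comm, smul_mul_assoc, iMulI_mul_iMulI,
    mul_one, one_mul]
  module

theorem twistElem_mul_twistElem_eq_one {x y x' y' : R} (h₁ : x * x' + a₁ * a₂ * (y * y') = 1)
    (h₂ : x * y' + y * x' = 0) : P.twistElem x y * P.twistElem x' y' = 1 := by
  rw [twistElem_mul_twistElem, h₁, h₂, twistElem, zero_smul, add_zero, one_smul]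

theorem twistElem_neg_mul_twistElem (x y : R) :
    P.twistElem x (-y) * P.twistElem x y = (x ^ 2 - a₁ * a₂ * y ^ 2) • 1 := by
  rw [twistElem_mul_twistElem, twistElem]
  module

@[simps fst snd]
def twist {b₁' b₂' : R} (x y : R) (hb₁ : b₁' = (x ^ 2 - a₁ * a₂ * y ^ 2) * b₁)
    (hb₂ : b₂' = (x ^ 2 - a₁ * a₂ * y ^ 2) * b₂) : CommutingBases A a₁ b₁' a₂ b₂' where
  fst := P.fst.twist (P.commute_fst_i_twistElem x y) (P.fst_j_mul_twistElem x y)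
    (P.twistElem_neg_mul_twistElem x y) hb₁
  snd := P.snd.twist (P.commute_snd_i_twistElem x y) (P.snd_j_mul_twistElem x y)
    (P.twistElem_neg_mul_twistElem x y) hb₂
  commute_i_i := P.commute_i_i
  commute_i_j := P.commute_i_j.mul_right (P.commute_fst_i_twistElem x y)
  commute_j_i := P.commute_j_i.mul_left (P.commute_snd_i_twistElem x y).symm
  commute_j_j := by
    have hfst : P.twistElem x y * P.fst.j = P.fst.j * P.twistElem x (-y) := by
      rw [fst_j_mul_twistElem, neg_neg]
    have hsnd : P.twistElem x y * P.snd.j = P.snd.j * P.twistElem x (-y) := by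
      rw [snd_j_mul_twistElem, neg_neg]
    change P.fst.j * _ * (P.snd.j * _) = P.snd.j * _ * (P.fst.j * _)
    calc P.fst.j * P.twistElem x y * (P.snd.j * P.twistElem x y)
        = P.fst.j * P.snd.j * (P.twistElem x (-y) * P.twistElem x y) := by
          simp only [mul_assoc]; rw [← mul_assoc (P.twistElem x y) P.snd.j, hsnd, mul_assoc]
      _ = P.snd.j * P.fst.j * (P.twistElem x (-y) * P.twistElem x y) := by
          rw [P.commute_j_j.eq]
      _ = P.snd.j * P.twistElem x y * (P.fst.j * P.twistElem x y) := by
          simp only [mul_assoc]; rw [← mul_assoc (P.twistElem x y) P.fst.j, hfst, mul_assoc]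

@[simp]
theorem twist_twistElem {b₁' b₂' x y : R} (hb₁ : b₁' = (x ^ 2 - a₁ * a₂ * y ^ 2) * b₁)
    (hb₂ : b₂' = (x ^ 2 - a₁ * a₂ * y ^ 2) * b₂) :
    (P.twist x y hb₁ hb₂).twistElem = P.twistElem :=
  rfl

variable (R a₁ b₁ a₂ b₂) in
@[simps fst snd]
def canonical : CommutingBases (ℍ[R,a₁,b₁] ⊗[R] ℍ[R,a₂,b₂]) a₁ b₁ a₂ b₂ where
  fst := (Basis.self R).compHom includeLeft
  snd := (Basis.self R).compHom includeRight
  commute_i_i := (Commute.one_right _).tmul (Commute.one_left _)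
  commute_i_j := (Commute.one_right _).tmul (Commute.one_left _)
  commute_j_i := (Commute.one_right _).tmul (Commute.one_left _)
  commute_j_j := (Commute.one_right _).tmul (Commute.one_left _)

theorem tensorLift_twistElem (x y : R) :
    P.tensorLift ((canonical R a₁ b₁ a₂ b₂).twistElem x y) = P.twistElem x y := by
  simp only [twistElem, iMulI, map_add, map_smul, map_one, map_mul, canonical_fst, canonical_snd,
    Basis.i_compHom, includeLeft_apply, includeRight_apply, tensorLift_tmul_one,
    tensorLift_one_tmul, Basis.liftHom_self_i]

theorem tensorLift_twist_comp_tensorLift_twist {b₁' b₂' x y x' y' : R}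
    (hb₁ : b₁' = (x ^ 2 - a₁ * a₂ * y ^ 2) * b₁) (hb₂ : b₂' = (x ^ 2 - a₁ * a₂ * y ^ 2) * b₂)
    (hb₁' : b₁ = (x' ^ 2 - a₁ * a₂ * y' ^ 2) * b₁')
    (hb₂' : b₂ = (x' ^ 2 - a₁ * a₂ * y' ^ 2) * b₂')
    (h₁ : x * x' + a₁ * a₂ * (y * y') = 1) (h₂ : x * y' + y * x' = 0) :
    ((canonical R a₁ b₁ a₂ b₂).twist x y hb₁ hb₂).tensorLift.comp
      ((canonical R a₁ b₁' a₂ b₂').twist x' y' hb₁' hb₂').tensorLift = AlgHom.id R _ := by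
  ext <;> simp only [AlgHom.comp_apply, AlgHom.restrictScalars_apply, AlgHom.id_apply,
    includeLeft_apply, includeRight_apply, tensorLift_tmul_one, tensorLift_one_tmul,
    Basis.liftHom_self_i, Basis.liftHom_self_j, twist_fst, twist_snd, Basis.i_twist, Basis.j_twist,
    canonical_fst, canonical_snd, Basis.i_compHom, Basis.j_compHom, map_mul, tensorLift_twistElem,
    twist_twistElem, mul_assoc, (canonical R a₁ b₁ a₂ b₂).twistElem_mul_twistElem_eq_one h₁ h₂,
    mul_one]

end CommutingBases

end QuaternionAlgebra

open QuaternionAlgebra CommutingBases in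
theorem quaternion_tensor_iso_general {F : Type*} [Field F]
    (c₁ c₂ d₁ d₂ β : F)
    (h : β ^ 2 - c₁ * c₂ ≠ 0) :
    Nonempty ((ℍ[F, c₁, d₁] ⊗[F] ℍ[F, c₂, d₂]) ≃ₐ[F]
      (ℍ[F, c₁, (β ^ 2 - c₁ * c₂) * d₁] ⊗[F] ℍ[F, c₂, (β ^ 2 - c₁ * c₂) * d₂])) := by
  generalize hn : β ^ 2 - c₁ * c₂ = n at h ⊢
  have down (d : F) : n * d = (β ^ 2 - c₁ * c₂ * 1 ^ 2) * d := by rw [← hn]; ring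
  have up (d : F) : d = ((β / n) ^ 2 - c₁ * c₂ * (-1 / n) ^ 2) * (n * d) := by
    rw [← hn] at h ⊢; field_simp
  have inv : β * (β / n) + c₁ * c₂ * (1 * (-1 / n)) = 1 := by
    rw [← hn] at h ⊢; field_simp; ring
  exact ⟨AlgEquiv.ofAlgHom
    ((canonical F c₁ (n * d₁) c₂ (n * d₂)).twist _ _ (up d₁) (up d₂)).tensorLift
    ((canonical F c₁ d₁ c₂ d₂).twist _ _ (down d₁) (down d₂)).tensorLift
    (tensorLift_twist_comp_tensorLift_twist _ _ _ _ (by linear_combination inv) (by ring))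
    (tensorLift_twist_comp_tensorLift_twist _ _ _ _ inv (by ring))⟩

/-- Over a field of characteristic not 2, for `c₁, c₂, d₁, d₂ ≠ 0` and `β² − c₁c₂ ≠ 0`,
`(c₁,d₁) ⊗ (c₂,d₂) ≅ (c₁, (β²−c₁c₂)d₁) ⊗ (c₂, (β²−c₁c₂)d₂)`. -/
theorem quaternion_tensor_iso {F : Type*} [Field F] (h2 : (2 : F) ≠ 0)
    (c₁ c₂ d₁ d₂ β : F) (hc₁ : c₁ ≠ 0) (hc₂ : c₂ ≠ 0) (hd₁ : d₁ ≠ 0) (hd₂ : d₂ ≠ 0)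
    (h : β ^ 2 - c₁ * c₂ ≠ 0) :
    Nonempty ((ℍ[F, c₁, d₁] ⊗[F] ℍ[F, c₂, d₂]) ≃ₐ[F]
      (ℍ[F, c₁, (β ^ 2 - c₁ * c₂) * d₁] ⊗[F] ℍ[F, c₂, (β ^ 2 - c₁ * c₂) * d₂])) :=
  quaternion_tensor_iso_general c₁ c₂ d₁ d₂ β h
end
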